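/- Coded unlearning is perfect for ridge regression with a one-hot code: suppose the coded shard is formed as (X̄, ȳ) = (∑ᵢ gᵢ Xᵢ, ∑ᵢ gᵢ yᵢ) from uncoded shards (Xᵢ, yᵢ), and a sample (x_u, y_u) occupying row i' of shard s' is unlearned by replacing row i' of (X̄, ȳ) with (x̄_{i'} − g_{s'} x_u, ȳ_{i'} − g_{s'} y_u). Then the resulting coded shard equals the coded shard one would obtain by encoding the uncoded dataset in which row i' of shard s' is replaced by (x_{s',i'} − x_u, y_{s',i'} − y_u); consequently the retrained ridge regression weak model equals the model trained from scratch on the updated coded data. -/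

import Mathlib

noncomputable def ridgeLoss {n D : ℕ} (X : Matrix (Fin n) (Fin D) ℝ) (y : Fin n → ℝ)
    (lam : ℝ) (w : Fin D → ℝ) : ℝ :=
  (1 / (n : ℝ)) * ∑ i, (y i - ∑ j, X i j * w j) ^ 2 + lam * ∑ j, (w j) ^ 2

/-! Subtracting `g s' • u` from row `k` of the coded shard `∑ i, g i • f i` is the same as
encoding the shards in which `u` has been subtracted from row `k` of shard `s'`, because the
encoding is linear in the shards. The retrained model then agrees with the model trained from
scratch since the ridge loss is strictly convex for `lam > 0`, so its minimizer is unique. -/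

open Function Set

section Encoding

variable {ι κ R M : Type*} [Fintype ι] [DecidableEq ι] [DecidableEq κ]
  [Semiring R] [AddCommGroup M] [Module R M]

lemma update_sub_eq_sub_single (f : κ → M) (k : κ) (u : M) :
    update f k (f k - u) = f - Pi.single k u := by
  funext b
  by_cases hb : b = k
  · subst hb; simp
  · simp [hb]

lemma sum_smul_update_sub (g : ι → R) (f : ι → M) (s' : ι) (u : M) :
    ∑ i, g i • update f s' (f s' - u) i = ∑ i, g i • f i - g s' • u := by
  simp [update_sub_eq_sub_single, smul_sub, Finset.sum_sub_distrib, Pi.single_apply]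

lemma sum_smul_update_update_sub (g : ι → R) (f : ι → κ → M) (s' : ι) (k : κ) (u : M) :
    ∑ i, g i • update f s' (update (f s') k (f s' k - u)) i =
      update (∑ i, g i • f i) k ((∑ i, g i • f i) k - g s' • u) := by
  rw [update_sub_eq_sub_single, sum_smul_update_sub, update_sub_eq_sub_single,
    Pi.single_smul']

end Encoding

section Ridge

lemma strictConvexOn_sum_comp_apply {ι E : Type*} [Fintype ι] [AddCommMonoid E] [Module ℝ E]
    {f : E → ℝ} (hf : StrictConvexOn ℝ univ f) :
    StrictConvexOn ℝ univ (fun w : ι → E => ∑ j, f (w j)) := by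
  refine ⟨convex_univ, fun w _ v _ hwv a b ha hb hab => ?_⟩
  obtain ⟨j, hj⟩ := Function.ne_iff.mp hwv
  simp only [smul_eq_mul, Finset.mul_sum, ← Finset.sum_add_distrib, Pi.add_apply, Pi.smul_apply]
  exact Finset.sum_lt_sum
    (fun i _ => hf.convexOn.2 (mem_univ _) (mem_univ _) ha.le hb.le hab)
    ⟨j, Finset.mem_univ j, hf.2 (mem_univ _) (mem_univ _) hj ha hb hab⟩

variable {n D : ℕ} (X : Matrix (Fin n) (Fin D) ℝ) (y : Fin n → ℝ) {lam : ℝ}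

lemma strictConvexOn_ridgeLoss (hlam : 0 < lam) : StrictConvexOn ℝ univ (ridgeLoss X y lam) := by
  refine ⟨convex_univ, fun w _ v _ hwv a b ha hb hab => ?_⟩
  have hsq : ConvexOn ℝ univ fun x : ℝ => x ^ 2 := even_two.convexOn_pow
  have hfit : ∀ i, (y i - ∑ j, X i j * (a • w + b • v) j) ^ 2 ≤
      a * (y i - ∑ j, X i j * w j) ^ 2 + b * (y i - ∑ j, X i j * v j) ^ 2 := by
    intro i
    have hres : y i - ∑ j, X i j * (a • w + b • v) j =
        a * (y i - ∑ j, X i j * w j) + b * (y i - ∑ j, X i j * v j) := by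
      have hlin : ∑ j, X i j * (a • w + b • v) j =
          a * ∑ j, X i j * w j + b * ∑ j, X i j * v j := by
        rw [Finset.mul_sum, Finset.mul_sum, ← Finset.sum_add_distrib]
        refine Finset.sum_congr rfl fun j _ => ?_
        simp only [Pi.add_apply, Pi.smul_apply, smul_eq_mul]
        ring
      linear_combination (y i) * hab.symm - hlin
    simpa only [hres, smul_eq_mul] using hsq.2 (mem_univ _) (mem_univ _) ha.le hb.le hab
  have hreg : ∑ j, (a • w + b • v) j ^ 2 < a * ∑ j, w j ^ 2 + b * ∑ j, v j ^ 2 :=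
    (strictConvexOn_sum_comp_apply (Even.strictConvexOn_pow even_two two_ne_zero)).2
      (mem_univ w) (mem_univ v) hwv ha hb hab
  have hfit_sum := Finset.sum_le_sum fun i (_ : i ∈ Finset.univ) => hfit i
  simp only [Finset.sum_add_distrib, ← Finset.mul_sum] at hfit_sum
  have hn : (0 : ℝ) ≤ 1 / n := by positivity
  simp only [ridgeLoss, smul_eq_mul]
  linarith [mul_le_mul_of_nonneg_left hfit_sum hn, mul_lt_mul_of_pos_left hreg hlam]

lemma ridgeLoss_minimizer_unique (hlam : 0 < lam) {w w' : Fin D → ℝ}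
    (hw : ∀ v, ridgeLoss X y lam w ≤ ridgeLoss X y lam v)
    (hw' : ∀ v, ridgeLoss X y lam w' ≤ ridgeLoss X y lam v) : w = w' :=
  (strictConvexOn_ridgeLoss X y hlam).eq_of_isMinOn (isMinOn_univ_iff.mpr hw)
    (isMinOn_univ_iff.mpr hw') (mem_univ w) (mem_univ w')

end Ridge

theorem coded_unlearning_perfect_general {s nb d : ℕ}
    (Xs : Fin s → Matrix (Fin nb) (Fin d) ℝ) (ys : Fin s → Fin nb → ℝ)
    (g : Fin s → ℝ) (s' : Fin s) (i' : Fin nb) (xu : Fin d → ℝ) (yu : ℝ)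
    (lam : ℝ) (hlam : 0 < lam)
    -- coded shard
    (Xbar : Matrix (Fin nb) (Fin d) ℝ) (ybar : Fin nb → ℝ)
    (hXbar : Xbar = ∑ i, g i • Xs i) (hybar : ybar = ∑ i, g i • ys i)
    -- updated coded shard after subtracting the unlearned sample
    (Xtil : Matrix (Fin nb) (Fin d) ℝ) (ytil : Fin nb → ℝ)
    (hXtil : Xtil = Xbar.updateRow i' (Xbar i' - g s' • xu))
    (hytil : ytil = Function.update ybar i' (ybar i' - g s' * yu))
    -- updated uncoded shards, with row i' of shard s' replaced by (x_{s',i'} − x_u, y_{s',i'} − y_u)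
    (Xs' : Fin s → Matrix (Fin nb) (Fin d) ℝ) (ys' : Fin s → Fin nb → ℝ)
    (hXs' : Xs' = Function.update Xs s' ((Xs s').updateRow i' (Xs s' i' - xu)))
    (hys' : ys' = Function.update ys s' (Function.update (ys s') i' (ys s' i' - yu))) :
    (Xtil = ∑ i, g i • Xs' i) ∧ (ytil = ∑ i, g i • ys' i) ∧
    (∀ w w' : Fin d → ℝ,
      (∀ v, ridgeLoss Xtil ytil lam w ≤ ridgeLoss Xtil ytil lam v) →
      (∀ v, ridgeLoss (∑ i, g i • Xs' i) (∑ i, g i • ys' i) lam w'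
              ≤ ridgeLoss (∑ i, g i • Xs' i) (∑ i, g i • ys' i) lam v) →
      w = w') := by
  subst hXbar hybar hXtil hytil hXs' hys'
  have hX : (∑ i, g i • Xs i).updateRow i' ((∑ i, g i • Xs i) i' - g s' • xu) =
      ∑ i, g i • update Xs s' ((Xs s').updateRow i' (Xs s' i' - xu)) i :=
    (sum_smul_update_update_sub g Xs s' i' xu).symm
  have hy : update (∑ i, g i • ys i) i' ((∑ i, g i • ys i) i' - g s' * yu) =
      ∑ i, g i • update ys s' (update (ys s') i' (ys s' i' - yu)) i :=
    (sum_smul_update_update_sub g ys s' i' yu).symm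
  refine ⟨hX, hy, fun w w' hw hw' => ?_⟩
  rw [hX, hy] at hw
  exact ridgeLoss_minimizer_unique _ _ hlam hw hw'

/-- Coded unlearning is perfect for ridge regression: subtracting the sample's contribution
    from the coded shard yields exactly the encoding of the updated uncoded dataset, and
    hence the retrained weak model equals the model trained from scratch on that data. -/
theorem coded_unlearning_perfect {s nb d : ℕ}
    (Xs : Fin s → Matrix (Fin nb) (Fin d) ℝ) (ys : Fin s → Fin nb → ℝ)
    (g : Fin s → ℝ) (s' : Fin s) (i' : Fin nb) (xu : Fin d → ℝ) (yu : ℝ)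
    (lam : ℝ) (hlam : 0 < lam) (hnb : 0 < nb)
    -- coded shard
    (Xbar : Matrix (Fin nb) (Fin d) ℝ) (ybar : Fin nb → ℝ)
    (hXbar : Xbar = ∑ i, g i • Xs i) (hybar : ybar = ∑ i, g i • ys i)
    -- updated coded shard after subtracting the unlearned sample
    (Xtil : Matrix (Fin nb) (Fin d) ℝ) (ytil : Fin nb → ℝ)
    (hXtil : Xtil = Xbar.updateRow i' (Xbar i' - g s' • xu))
    (hytil : ytil = Function.update ybar i' (ybar i' - g s' * yu))
    -- updated uncoded shards, with row i' of shard s' replaced by (x_{s',i'} − x_u, y_{s',i'} − y_u)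
    (Xs' : Fin s → Matrix (Fin nb) (Fin d) ℝ) (ys' : Fin s → Fin nb → ℝ)
    (hXs' : Xs' = Function.update Xs s' ((Xs s').updateRow i' (Xs s' i' - xu)))
    (hys' : ys' = Function.update ys s' (Function.update (ys s') i' (ys s' i' - yu))) :
    (Xtil = ∑ i, g i • Xs' i) ∧ (ytil = ∑ i, g i • ys' i) ∧
    (∀ w w' : Fin d → ℝ,
      (∀ v, ridgeLoss Xtil ytil lam w ≤ ridgeLoss Xtil ytil lam v) →
      (∀ v, ridgeLoss (∑ i, g i • Xs' i) (∑ i, g i • ys' i) lam w'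
              ≤ ridgeLoss (∑ i, g i • Xs' i) (∑ i, g i • ys' i) lam v) →
      w = w') :=
  coded_unlearning_perfect_general Xs ys g s' i' xu yu lam hlam Xbar ybar hXbar hybar Xtil ytil
    hXtil hytil Xs' ys' hXs' hys'
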